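/- In a modal FM model M = (X, ≤₁, ≤₂, R, V) with V valuing propositional variables in RO₁₂(X), the truth set of every formula of the basic modal language (built from propositional variables, ⊥, ⊤, ∧, ∨, →, □ with the FM satisfaction clauses) is a refined regular open set: ⟦φ⟧ ∈ RO₁₂(X). -/

import Mathlib

/-- `I₁C₂` for the Alexandroff upset topologies of an FM frame. -/
def fmIC {X : Type*} (le1 le2 : X → X → Prop) (A : Set X) : Set X :=
  {x | ∀ y, le1 x y → ∃ z, le2 y z ∧ z ∈ A}

/-- The box operation on sets. -/
def fmBox {X : Type*} (R : X → X → Prop) (Y : Set X) : Set X :=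
  {w | ∀ v, R w v → v ∈ Y}

/-- Formulas of the basic intuitionistic modal language. -/
inductive FMForm where
  | var : ℕ → FMForm
  | bot : FMForm
  | top : FMForm
  | and : FMForm → FMForm → FMForm
  | or : FMForm → FMForm → FMForm
  | imp : FMForm → FMForm → FMForm
  | box : FMForm → FMForm

/-- Satisfaction in a modal FM model. -/
def fmSat {X : Type*} (le1 le2 R : X → X → Prop) (V : ℕ → Set X) :
    FMForm → X → Prop
  | .var n, w => w ∈ V n
  | .bot, _ => False
  | .top, _ => True
  | .and φ ψ, w => fmSat le1 le2 R V φ w ∧ fmSat le1 le2 R V ψ w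
  | .or φ ψ, w => ∀ v, le1 w v → ∃ u, le2 v u ∧
      (fmSat le1 le2 R V φ u ∨ fmSat le1 le2 R V ψ u)
  | .imp φ ψ, w => ∀ v, le1 w v → fmSat le1 le2 R V φ v → fmSat le1 le2 R V ψ v
  | .box φ, w => ∀ v, R w v → fmSat le1 le2 R V φ v

/-!
Truth sets are built from valuations by `∩`, by `I₁C₂(· ∪ ·)`, by the `≤₁`-Heyting implication
and by `□`, so it suffices that each of these preserves `RO₁₂(X)`. Sets of the form `I₁C₂ A`
are `≤₁`-upsets and `I₁C₂` is idempotent, which handles `∨` and `∧`; for `→` the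
inclusion `≤₂ ⊆ ≤₁` lets the antecedent, a `≤₁`-upset, survive the `≤₂`-step that `C₂` takes.
-/

section FMRegularOpen

variable {X : Type*} {le1 le2 : X → X → Prop} {A B : Set X}

def IsUpClosed (r : X → X → Prop) (A : Set X) : Prop :=
  ∀ ⦃x y⦄, r x y → x ∈ A → y ∈ A

def IsFMRegularOpen (le1 le2 : X → X → Prop) (A : Set X) : Prop :=
  A = fmIC le1 le2 A

def fmImp (le1 : X → X → Prop) (A B : Set X) : Set X :=
  {w | ∀ v, le1 w v → v ∈ A → v ∈ B}

theorem fmIC_mono (h : A ⊆ B) : fmIC le1 le2 A ⊆ fmIC le1 le2 B := fun _ hx y hxy =>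
  let ⟨z, hyz, hz⟩ := hx y hxy
  ⟨z, hyz, h hz⟩

theorem isUpClosed_fmIC [IsTrans X le1] : IsUpClosed le1 (fmIC le1 le2 A) :=
  fun _ _ hxy hx z hyz => hx z (trans_of le1 hxy hyz)

theorem IsUpClosed.subset_fmIC [Std.Refl le2] (hA : IsUpClosed le1 A) :
    A ⊆ fmIC le1 le2 A :=
  fun _ hx y hxy => ⟨y, refl_of le2 y, hA hxy hx⟩

theorem fmIC_fmIC_subset [Std.Refl le1] [IsTrans X le2] :
    fmIC le1 le2 (fmIC le1 le2 A) ⊆ fmIC le1 le2 A := by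
  intro x hx y hxy
  obtain ⟨z, hyz, hz⟩ := hx y hxy
  obtain ⟨u, hzu, hu⟩ := hz z (refl_of le1 z)
  exact ⟨u, trans_of le2 hyz hzu, hu⟩

theorem isFMRegularOpen_fmIC [Std.Refl le1] [IsTrans X le1] [Std.Refl le2] [IsTrans X le2] :
    IsFMRegularOpen le1 le2 (fmIC le1 le2 A) :=
  (fmIC_fmIC_subset.antisymm isUpClosed_fmIC.subset_fmIC).symm

theorem IsFMRegularOpen.isUpClosed [IsTrans X le1] (hA : IsFMRegularOpen le1 le2 A) :
    IsUpClosed le1 A := by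
  rw [hA]
  exact isUpClosed_fmIC

theorem isFMRegularOpen_empty [Std.Refl le1] : IsFMRegularOpen le1 le2 (∅ : Set X) :=
  (Set.empty_subset _).antisymm fun x hx =>
    let ⟨_, _, hz⟩ := hx x (refl_of le1 x)
    hz

theorem isFMRegularOpen_univ [Std.Refl le2] : IsFMRegularOpen le1 le2 (Set.univ : Set X) :=
  (Set.subset_univ _).antisymm' fun _ _ y _ => ⟨y, refl_of le2 y, trivial⟩

theorem IsFMRegularOpen.inter [IsTrans X le1] [Std.Refl le2] (hA : IsFMRegularOpen le1 le2 A)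
    (hB : IsFMRegularOpen le1 le2 B) : IsFMRegularOpen le1 le2 (A ∩ B) := by
  refine Set.Subset.antisymm ?_ ?_
  · exact fun x ⟨hxA, hxB⟩ y hxy =>
      ⟨y, refl_of le2 y, hA.isUpClosed hxy hxA, hB.isUpClosed hxy hxB⟩
  · intro x hx
    have hxA : x ∈ fmIC le1 le2 A := fmIC_mono Set.inter_subset_left hx
    have hxB : x ∈ fmIC le1 le2 B := fmIC_mono Set.inter_subset_right hx
    rw [← hA] at hxA
    rw [← hB] at hxB
    exact ⟨hxA, hxB⟩

theorem isFMRegularOpen_fmImp [Std.Refl le1] [IsTrans X le1] [Std.Refl le2]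
    (hsub : ∀ x y, le2 x y → le1 x y) (hA : IsUpClosed le1 A)
    (hB : IsFMRegularOpen le1 le2 B) : IsFMRegularOpen le1 le2 (fmImp le1 A B) := by
  refine Set.Subset.antisymm ?_ ?_
  · exact IsUpClosed.subset_fmIC fun x y hxy hx v hyv => hx v (trans_of le1 hxy hyv)
  · intro x hx v hxv hvA
    rw [hB]
    intro y hvy
    obtain ⟨z, hyz, hz⟩ := hx y (trans_of le1 hxv hvy)
    have hzA : z ∈ A := hA (trans_of le1 hvy (hsub y z hyz)) hvA
    exact ⟨z, hyz, hz z (refl_of le1 z) hzA⟩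

end FMRegularOpen

/-- In a modal FM model, the truth set of every formula is refined regular open. -/
theorem fm_truthSet_refinedRegularOpen {X : Type*} (le1 le2 R : X → X → Prop)
    [IsPartialOrder X le1] [IsPartialOrder X le2]
    (hsub : ∀ x y, le2 x y → le1 x y)
    (hbox : ∀ Y : Set X, Y = fmIC le1 le2 Y → fmBox R Y = fmIC le1 le2 (fmBox R Y))
    (V : ℕ → Set X) (hV : ∀ n, V n = fmIC le1 le2 (V n)) :
    ∀ φ : FMForm,
      {w : X | fmSat le1 le2 R V φ w} =
        fmIC le1 le2 {w : X | fmSat le1 le2 R V φ w} := by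
  intro φ
  induction φ with
  | var n => exact hV n
  | bot => exact isFMRegularOpen_empty
  | top => exact isFMRegularOpen_univ
  | and φ ψ ihφ ihψ => exact IsFMRegularOpen.inter ihφ ihψ
  | or φ ψ => exact isFMRegularOpen_fmIC
  | imp φ ψ ihφ ihψ => exact isFMRegularOpen_fmImp hsub (IsFMRegularOpen.isUpClosed ihφ) ihψ
  | box φ ihφ => exact hbox _ ihφ
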